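/- Let (Θ, 𝔉) be a measurable space, μ a probability measure on Θ, and f, ρ : Θ → ℝ measurable functions. Let K ≥ 1 be a natural number, τ ∈ ℝ, and let ε ∈ (0, 1] and η ∈ (0, 1) satisfy ε ≥ (2/K)·(ln(1/η) + 1). For a sample vector ω = (ω₁, …, ω_K) ∈ Θ^K, write λ*(ω) := max_{1≤i≤K} |f(ω_i) − ρ(ω_i)|. Then, with respect to the product measure μ^K on Θ^K, the set of sample vectors ω for which the following implication holds has μ^K-measure at least 1 − η: if f(θ) − λ*(ω) ≥ τ for every θ ∈ Θ, then μ({θ ∈ Θ : ρ(θ) ≥ τ}) ≥ 1 − ε. -/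

import Mathlib

/-!
Write `g = |f - ρ|` and let `t₀` be a `(1 - ε)`-quantile of `g` under `μ`, so that
`μ {g < t₀} ≤ 1 - ε ≤ μ {g ≤ t₀}`. Unless all `K` samples land in `{g < t₀}`, an event of
probability at most `(1 - ε) ^ K ≤ exp (-K ε) ≤ η`, the sample maximum `λ*` is at least `t₀`.
The verification condition gives `{g ≤ λ*} ⊆ {ρ ≥ τ}`, hence `μ {ρ ≥ τ} ≥ μ {g ≤ t₀} ≥ 1 - ε`.
-/

open MeasureTheory Set Filter
open scoped ENNReal

theorem exists_measure_Iio_le_le_measure_Iic (ν : Measure ℝ) [IsFiniteMeasure ν] {c : ℝ≥0∞}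
    (hc0 : 0 < c) (hc : c < ν univ) : ∃ t, ν (Iio t) ≤ c ∧ c ≤ ν (Iic t) := by
  set S := {t | c ≤ ν (Iic t)}
  have hS : S.Nonempty :=
    ((tendsto_measure_Iic_atTop ν).eventually (eventually_gt_nhds hc)).exists.imp fun _ ↦ le_of_lt
  have hS_bdd : BddBelow S := by
    have h := tendsto_measure_iInter_atBot (μ := ν) (s := Iic)
      (fun _ ↦ measurableSet_Iic.nullMeasurableSet) monotone_Iic ⟨0, measure_ne_top _ _⟩
    rw [iInter_Iic_eq_empty_iff.2 (by simp), measure_empty] at h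
    obtain ⟨t₁, ht₁⟩ := (h.eventually (eventually_lt_nhds hc0)).exists
    exact ⟨t₁, fun t ht ↦ le_of_not_gt fun htt ↦
      (ht.trans (measure_mono (Iic_subset_Iic.2 htt.le))).not_gt ht₁⟩
  refine ⟨sInf S, ?_, ?_⟩
  · obtain ⟨u, hu_mono, hu_lt, hu_lim⟩ := exists_seq_strictMono_tendsto (sInf S)
    rw [← iUnion_Iic_eq_Iio_of_lt_of_tendsto hu_lt hu_lim,
      Monotone.measure_iUnion fun _ _ hmn ↦ Iic_subset_Iic.2 (hu_mono.monotone hmn)]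
    exact iSup_le fun n ↦ (not_le.1 fun h ↦ (hu_lt n).not_ge (csInf_le hS_bdd h)).le
  · obtain ⟨v, hv_anti, hv_gt, hv_lim⟩ := exists_seq_strictAnti_tendsto (sInf S)
    have hIic : Iic (sInf S) = ⋂ n, Iic (v n) := by
      ext x
      simp only [mem_Iic, mem_iInter]
      exact ⟨fun hx n ↦ hx.trans (hv_gt n).le, fun hx ↦ ge_of_tendsto' hv_lim hx⟩
    rw [hIic, Antitone.measure_iInter (fun _ _ hmn ↦ Iic_subset_Iic.2 (hv_anti.antitone hmn))
      (fun _ ↦ measurableSet_Iic.nullMeasurableSet) ⟨0, measure_ne_top _ _⟩]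
    refine le_iInf fun n ↦ ?_
    obtain ⟨t, ht, htv⟩ := exists_lt_of_csInf_lt hS (hv_gt n)
    exact ht.trans (measure_mono (Iic_subset_Iic.2 htv.le))

theorem measure_pi_measure_le_iSup_lt_le_pow {Θ ι : Type*} [Fintype ι] [MeasurableSpace Θ]
    (μ : Measure Θ) [IsProbabilityMeasure μ] {g : Θ → ℝ} (hg : Measurable g) {c : ℝ≥0∞}
    (hc0 : 0 < c) (hc1 : c < 1) :
    Measure.pi (fun _ : ι ↦ μ) {ω | μ {θ | g θ ≤ ⨆ i, g (ω i)} < c} ≤ c ^ Fintype.card ι := by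
  have : IsProbabilityMeasure (μ.map g) := Measure.isProbabilityMeasure_map hg.aemeasurable
  obtain ⟨t, hlt, hle⟩ := exists_measure_Iio_le_le_measure_Iic (μ.map g) hc0 (by simpa using hc1)
  rw [Measure.map_apply hg measurableSet_Iio] at hlt
  rw [Measure.map_apply hg measurableSet_Iic] at hle
  calc _ ≤ Measure.pi (fun _ : ι ↦ μ) (univ.pi fun _ ↦ g ⁻¹' Iio t) := by
        refine measure_mono fun ω hω i _ ↦ show g (ω i) < t from not_le.1 fun hti ↦
          (hle.trans (measure_mono fun θ hθ ↦ hθ.trans (hti.trans ?_))).not_gt hω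
        exact le_ciSup (f := fun i ↦ g (ω i)) (finite_range _).bddAbove i
    _ = μ (g ⁻¹' Iio t) ^ Fintype.card ι := by
        rw [Measure.pi_pi, Finset.prod_const, Finset.card_univ]
    _ ≤ c ^ Fintype.card ι := pow_le_pow_left₀ zero_le hlt _

theorem one_sub_pow_le_of_log_inv_le {ε η : ℝ} {K : ℕ} (hε : ε ≤ 1) (hη : 0 < η)
    (h : Real.log (1 / η) ≤ K * ε) : (1 - ε) ^ K ≤ η :=
  calc (1 - ε) ^ K ≤ Real.exp (-ε) ^ K :=
        pow_le_pow_left₀ (sub_nonneg.2 hε) (Real.one_sub_le_exp_neg ε) K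
    _ = Real.exp (-(K * ε)) := by rw [← Real.exp_nat_mul]; ring_nf
    _ ≤ Real.exp (Real.log η) := by
        rw [one_div, Real.log_inv] at h
        exact Real.exp_le_exp.2 (by linarith)
    _ = η := Real.exp_log hη

theorem one_sub_measure_compl_le {α : Type*} [MeasurableSpace α] (μ : Measure α)
    [IsProbabilityMeasure μ] (s : Set α) : 1 - μ sᶜ ≤ μ s := by
  rw [tsub_le_iff_right, ← measure_univ (μ := μ)]
  exact measure_univ_le_add_compl s

theorem setOf_abs_sub_le_subset_of_forall_sub_ge {Θ : Type*} {f ρ : Θ → ℝ} {l τ : ℝ}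
    (h : ∀ θ, f θ - l ≥ τ) : {θ | |f θ - ρ θ| ≤ l} ⊆ {θ | ρ θ ≥ τ} := fun θ hθ ↦ by
  have := h θ
  have := le_abs_self (f θ - ρ θ)
  simp only [mem_ofPred_eq] at hθ ⊢
  linarith

theorem log_inv_le_mul_of_two_div_mul_le {K : ℕ} {ε η : ℝ} (hK : 1 ≤ K) (hη : η ∈ Ioo 0 1)
    (h : ε ≥ (2 / K) * (Real.log (1 / η) + 1)) : Real.log (1 / η) ≤ K * ε := by
  have hK_pos : (0 : ℝ) < K := by exact_mod_cast hK
  have hlog : 0 < Real.log (1 / η) := Real.log_pos (one_lt_one_div hη.1 hη.2)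
  have := mul_le_mul_of_nonneg_left h hK_pos.le
  rw [← mul_assoc, mul_div_cancel₀ _ hK_pos.ne'] at this
  linarith

theorem end_to_end_verification_guarantee_general
    {Θ : Type*} [MeasurableSpace Θ] (μ : Measure Θ) [IsProbabilityMeasure μ]
    (f ρ : Θ → ℝ) (hf : Measurable f) (hρ : Measurable ρ)
    (K : ℕ) (hK : 1 ≤ K) (τ ε η : ℝ)
    (hη : η ∈ Set.Ioo (0 : ℝ) 1)
    (hcond : ε ≥ (2 / K) * (Real.log (1 / η) + 1)) :
    (Measure.pi fun _ : Fin K => μ)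
      {ω : Fin K → Θ |
        (∀ θ : Θ, f θ - (⨆ i : Fin K, |f (ω i) - ρ (ω i)|) ≥ τ) →
          μ {θ : Θ | ρ θ ≥ τ} ≥ 1 - ENNReal.ofReal ε}
      ≥ 1 - ENNReal.ofReal η := by
  set P := Measure.pi fun _ : Fin K ↦ μ
  set T := {ω : Fin K → Θ |
        (∀ θ : Θ, f θ - (⨆ i : Fin K, |f (ω i) - ρ (ω i)|) ≥ τ) →
          μ {θ : Θ | ρ θ ≥ τ} ≥ 1 - ENNReal.ofReal ε}
  rcases le_or_gt 1 ε with hε1 | hε1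
  · have hT : T = univ := eq_univ_of_forall fun ω _ ↦ by
      rw [tsub_eq_zero_of_le (ENNReal.one_le_ofReal.2 hε1)]
      exact zero_le
    rw [hT, measure_univ]
    exact tsub_le_self
  have hKε := log_inv_le_mul_of_two_div_mul_le hK hη hcond
  have hε0 : 0 < ε := by
    have hK_pos : (0 : ℝ) < K := by exact_mod_cast hK
    nlinarith [Real.log_pos (one_lt_one_div hη.1 hη.2)]
  set c := ENNReal.ofReal (1 - ε) with hc
  have hTc : Tᶜ ⊆ {ω | μ {θ | |f θ - ρ θ| ≤ ⨆ i, |f (ω i) - ρ (ω i)|} < c} := by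
    intro ω hω
    simp only [T, mem_compl_iff, mem_ofPred_eq, Classical.not_imp, not_le] at hω
    obtain ⟨hverified, hunsafe⟩ := hω
    refine (measure_mono (setOf_abs_sub_le_subset_of_forall_sub_ge hverified)).trans_lt ?_
    rwa [hc, ENNReal.ofReal_sub _ hε0.le, ENNReal.ofReal_one]
  have hTc_le : P Tᶜ ≤ ENNReal.ofReal η :=
    calc P Tᶜ ≤ c ^ K := by
          simpa using (measure_mono hTc).trans
            (measure_pi_measure_le_iSup_lt_le_pow μ (hf.sub hρ).abs
              (ENNReal.ofReal_pos.2 (by linarith)) (ENNReal.ofReal_lt_one.2 (by linarith)))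
      _ = ENNReal.ofReal ((1 - ε) ^ K) := (ENNReal.ofReal_pow (by linarith) K).symm
      _ ≤ ENNReal.ofReal η :=
          ENNReal.ofReal_le_ofReal (one_sub_pow_le_of_log_inv_le hε1.le hη.1 hKε)
  exact (tsub_le_tsub_left hTc_le 1).trans (one_sub_measure_compl_le P T)

/-- End-to-end verification guarantee: with confidence at least `1 - η` over `K` i.i.d.
samples `ω` from `μ`, the following holds, where `λ*(ω) = max_{1≤i≤K} |f(ωᵢ) − ρ(ωᵢ)|`:
if the verification condition `f(θ) − λ*(ω) ≥ τ` holds for all `θ`, then the safety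
property `ρ(θ) ≥ τ` holds with probability at least `1 − ε`. -/
theorem end_to_end_verification_guarantee
    {Θ : Type*} [MeasurableSpace Θ] (μ : Measure Θ) [IsProbabilityMeasure μ]
    (f ρ : Θ → ℝ) (hf : Measurable f) (hρ : Measurable ρ)
    (K : ℕ) (hK : 1 ≤ K) (τ ε η : ℝ)
    (hε : ε ∈ Set.Ioc (0 : ℝ) 1) (hη : η ∈ Set.Ioo (0 : ℝ) 1)
    (hcond : ε ≥ (2 / K) * (Real.log (1 / η) + 1)) :
    (Measure.pi fun _ : Fin K => μ)
      {ω : Fin K → Θ |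
        (∀ θ : Θ, f θ - (⨆ i : Fin K, |f (ω i) - ρ (ω i)|) ≥ τ) →
          μ {θ : Θ | ρ θ ≥ τ} ≥ 1 - ENNReal.ofReal ε}
      ≥ 1 - ENNReal.ofReal η :=
  end_to_end_verification_guarantee_general μ f ρ hf hρ K hK τ ε η hη hcond
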